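/- arXiv:2312.13607 — 3 statements merged into one kernel-verified Lean document; each statement's English description precedes it below -/
import Mathlib

section
/- In the parametric C&CG-MIU algorithm, if the master problem's optimal solution x* is feasible and the subproblem SP2 returns an optimal pair (u*_od, π*) that has already appeared as an optimal solution of SP2 in a previous iteration (so its optimality cutting set is already in the master problem), then the current lower bound equals the current upper bound, i.e., LB = UB. -/
open Matrix

noncomputable section

/-- The continuous slice `U(x*|u_d) = {u_c ≥ 0 : F_c u_c ≤ h + Gx* − F_d u_d}`
of the mixed integer DDU set at the fixed first-stage decision (the data
`Fc, Fd, hvec` already incorporate `x*`). -/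
def slice14 {μu nu mu : ℕ} (Fc : Matrix (Fin μu) (Fin nu) ℝ)
    (Fd : Matrix (Fin μu) (Fin mu) ℝ) (hvec : Fin μu → ℝ) (ud : Fin mu → ℝ) :
    Set (Fin nu → ℝ) :=
  {uc | 0 ≤ uc ∧ Fc.mulVec uc ≤ hvec - Fd.mulVec ud}

/-- The mixed integer DDU set at `x*`: `u_d` ranges over the discrete set `Ud`
and `u_c` over the corresponding continuous slice. -/
def DDU14 {μu nu mu : ℕ} (Fc : Matrix (Fin μu) (Fin nu) ℝ)
    (Fd : Matrix (Fin μu) (Fin mu) ℝ) (hvec : Fin μu → ℝ)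
    (Ud : Set (Fin mu → ℝ)) : Set ((Fin nu → ℝ) × (Fin mu → ℝ)) :=
  {p | p.2 ∈ Ud ∧ p.1 ∈ slice14 Fc Fd hvec p.2}

/-- LP recourse set `Y(x*,u) = {y ≥ 0 : B₂y ≥ d − B₁x* − E_c u_c − E_d u_d}`. -/
def Yset14 {my ny nx nu mu : ℕ} (B2 : Matrix (Fin my) (Fin ny) ℝ)
    (d : Fin my → ℝ) (B1 : Matrix (Fin my) (Fin nx) ℝ) (xs : Fin nx → ℝ)
    (Ec : Matrix (Fin my) (Fin nu) ℝ) (Ed : Matrix (Fin my) (Fin mu) ℝ)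
    (u : (Fin nu → ℝ) × (Fin mu → ℝ)) : Set (Fin ny → ℝ) :=
  {y | 0 ≤ y ∧ d - B1.mulVec xs - Ec.mulVec u.1 - Ed.mulVec u.2 ≤ B2.mulVec y}

/-! If the cut for `(u*_od, π*)` is already in the master problem, the master witness
`(y, u_c)` is feasible for the recourse LP at `(u_c, u*_od)` with `u_c ∈ OU`, so weak duality
bounds the dual objective at `(u*, π*)` by `c₂·y ≤ η*`: the continuous part `u*_oc` of the
worst case only lowers `(−E_c u_c)ᵀπ*`, because `u_c` maximizes it over the slice. As `π*` is
dual optimal at `u*`, this dual objective is `η_o(x*)`, hence `UB ≤ c₁·x* + η_o ≤ LB`. -/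

section WeakDuality

variable {R m n k : Type*} [CommRing R] [PartialOrder R] [IsOrderedRing R]
  [Fintype m] [Fintype n] [Fintype k]

theorem dotProduct_le_of_primal_dual_feasible {B : Matrix m n R} {b : m → R} {c : n → R}
    {y : n → R} {π : m → R} (hy : 0 ≤ y) (hπ : 0 ≤ π) (hdual : Bᵀ *ᵥ π ≤ c)
    (hprimal : b ≤ B *ᵥ y) : b ⬝ᵥ π ≤ c ⬝ᵥ y :=
  calc b ⬝ᵥ π ≤ (B *ᵥ y) ⬝ᵥ π := dotProduct_le_dotProduct_of_nonneg_right hprimal hπ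
    _ = (Bᵀ *ᵥ π) ⬝ᵥ y := by rw [dotProduct_comm, dotProduct_mulVec, mulVec_transpose]
    _ ≤ c ⬝ᵥ y := dotProduct_le_dotProduct_of_nonneg_right hdual hy

theorem sub_mulVec_dotProduct_le_of_maximizer {B : Matrix m n R} {E : Matrix m k R} {r : m → R}
    {c : n → R} {y : n → R} {π : m → R} {u u' : k → R} (hy : 0 ≤ y) (hπ : 0 ≤ π)
    (hdual : Bᵀ *ᵥ π ≤ c) (hprimal : r ≤ B *ᵥ y + E *ᵥ u)
    (hmax : (-(E *ᵥ u')) ⬝ᵥ π ≤ (-(E *ᵥ u)) ⬝ᵥ π) :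
    (r - E *ᵥ u') ⬝ᵥ π ≤ c ⬝ᵥ y := by
  have hshift : (r - E *ᵥ u') ⬝ᵥ π ≤ (r - E *ᵥ u) ⬝ᵥ π := by
    rw [neg_dotProduct, neg_dotProduct, neg_le_neg_iff] at hmax
    rw [sub_dotProduct, sub_dotProduct]
    exact sub_le_sub_left hmax _
  exact hshift.trans <| dotProduct_le_of_primal_dual_feasible hy hπ hdual <|
    sub_le_iff_le_add.mpr hprimal

end WeakDuality

theorem stmt14_general {nx nu mu μu my ny : ℕ}
    (c1 : Fin nx → ℝ) (c2 : Fin ny → ℝ)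
    (B2 : Matrix (Fin my) (Fin ny) ℝ) (d : Fin my → ℝ)
    (B1 : Matrix (Fin my) (Fin nx) ℝ)
    (Ec : Matrix (Fin my) (Fin nu) ℝ) (Ed : Matrix (Fin my) (Fin mu) ℝ)
    (Fc : Matrix (Fin μu) (Fin nu) ℝ) (Fd : Matrix (Fin μu) (Fin mu) ℝ)
    (hvec : Fin μu → ℝ) (Ud : Set (Fin mu → ℝ))
    (xs : Fin nx → ℝ) (ustar : (Fin nu → ℝ) × (Fin mu → ℝ))
    (pistar : Fin my → ℝ) (ηstar LB UB ηo : EReal)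
    -- (u*, π*) is optimal to SP2:
    (hu : ustar ∈ DDU14 Fc Fd hvec Ud)
    (hworst : ηo = ⨅ y ∈ Yset14 B2 d B1 xs Ec Ed ustar, ((c2 ⬝ᵥ y : ℝ) : EReal))
    (hpi : 0 ≤ pistar ∧ B2.transpose.mulVec pistar ≤ c2)
    (hdualopt :
      (((d - B1.mulVec xs - Ec.mulVec ustar.1 - Ed.mulVec ustar.2) ⬝ᵥ pistar : ℝ) : EReal)
        = ⨅ y ∈ Yset14 B2 d B1 xs Ec Ed ustar, ((c2 ⬝ᵥ y : ℝ) : EReal))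
    -- the optimality cutting set for (u*_{od}, π*) is satisfied by (x*, η*):
    (hcut : ∃ y uc, 0 ≤ y ∧
      uc ∈ slice14 Fc Fd hvec ustar.2 ∧
      (∀ uc' ∈ slice14 Fc Fd hvec ustar.2,
        (-(Ec.mulVec uc')) ⬝ᵥ pistar ≤ (-(Ec.mulVec uc)) ⬝ᵥ pistar) ∧
      d - B1.mulVec xs - Ed.mulVec ustar.2 ≤ B2.mulVec y + Ec.mulVec uc ∧
      ((c2 ⬝ᵥ y : ℝ) : EReal) ≤ ηstar)
    -- bounds of the algorithm:
    (hLB : LB = ((c1 ⬝ᵥ xs : ℝ) : EReal) + ηstar)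
    (hUB : UB ≤ ((c1 ⬝ᵥ xs : ℝ) : EReal) + ηo)
    (hLBUB : LB ≤ UB) :
    LB = UB := by
  obtain ⟨y, uc, hy, -, hmax, hfeas, hyη⟩ := hcut
  have hdual_le : (d - B1 *ᵥ xs - Ec *ᵥ ustar.1 - Ed *ᵥ ustar.2) ⬝ᵥ pistar ≤ c2 ⬝ᵥ y := by
    rw [sub_right_comm]
    exact sub_mulVec_dotProduct_le_of_maximizer hy hpi.1 hpi.2 hfeas (hmax _ hu.2)
  have hηo : ηo ≤ ηstar := by
    rw [hworst, ← hdualopt]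
    exact (EReal.coe_le_coe_iff.mpr hdual_le).trans hyη
  refine le_antisymm hLBUB ?_
  calc UB ≤ ((c1 ⬝ᵥ xs : ℝ) : EReal) + ηo := hUB
    _ ≤ ((c1 ⬝ᵥ xs : ℝ) : EReal) + ηstar := by gcongr
    _ = LB := hLB.symm

/-- Theorem 2, Claim 2 (parametric C&CG-MIU): suppose the master solution `x*`
is feasible and the subproblem SP2 returns an optimal pair `(u*_{od}, π*)`
(worst case scenario `u* = (u*_{oc}, u*_{od}) ∈ U(x*)` attaining
`η_o(x*) = ⨆_{u∈U(x*)} ⨅_{y∈Y(x*,u)} c₂·y`, with `π*` a dual-optimal point of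
the recourse LP) whose optimality cutting set is already in the master problem,
i.e. the master solution `(x*, η*)` carries witnesses `y, u_c` with
`u_c ∈ OU(x*, u*_{od}, π*)` (maximizing `(−E_c u_c)ᵀπ*` over the slice, which is
nonempty), `B₂y + E_c u_c ≥ d − B₁x* − E_d u*_{od}`, `y ≥ 0` and `η* ≥ c₂·y`.
Then `LB = UB`, where `LB = c₁·x* + η*` and `UB ≤ c₁·x* + η_o(x*)`. -/
theorem stmt14 {nx nu mu μu my ny : ℕ}
    (c1 : Fin nx → ℝ) (c2 : Fin ny → ℝ)
    (B2 : Matrix (Fin my) (Fin ny) ℝ) (d : Fin my → ℝ)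
    (B1 : Matrix (Fin my) (Fin nx) ℝ)
    (Ec : Matrix (Fin my) (Fin nu) ℝ) (Ed : Matrix (Fin my) (Fin mu) ℝ)
    (Fc : Matrix (Fin μu) (Fin nu) ℝ) (Fd : Matrix (Fin μu) (Fin mu) ℝ)
    (hvec : Fin μu → ℝ) (Ud : Set (Fin mu → ℝ))
    (xs : Fin nx → ℝ) (ustar : (Fin nu → ℝ) × (Fin mu → ℝ))
    (pistar : Fin my → ℝ) (ηstar LB UB ηo : EReal)
    -- η_o(x*) : value of subproblem SP2
    (hηo : ηo = ⨆ u ∈ DDU14 Fc Fd hvec Ud,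
      ⨅ y ∈ Yset14 B2 d B1 xs Ec Ed u, ((c2 ⬝ᵥ y : ℝ) : EReal))
    -- (u*, π*) is optimal to SP2:
    (hu : ustar ∈ DDU14 Fc Fd hvec Ud)
    (hworst : ηo = ⨅ y ∈ Yset14 B2 d B1 xs Ec Ed ustar, ((c2 ⬝ᵥ y : ℝ) : EReal))
    (hpi : 0 ≤ pistar ∧ B2.transpose.mulVec pistar ≤ c2)
    (hdualopt :
      (((d - B1.mulVec xs - Ec.mulVec ustar.1 - Ed.mulVec ustar.2) ⬝ᵥ pistar : ℝ) : EReal)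
        = ⨅ y ∈ Yset14 B2 d B1 xs Ec Ed ustar, ((c2 ⬝ᵥ y : ℝ) : EReal))
    -- the optimality cutting set for (u*_{od}, π*) is satisfied by (x*, η*):
    (hcut : ∃ y uc, 0 ≤ y ∧
      uc ∈ slice14 Fc Fd hvec ustar.2 ∧
      (∀ uc' ∈ slice14 Fc Fd hvec ustar.2,
        (-(Ec.mulVec uc')) ⬝ᵥ pistar ≤ (-(Ec.mulVec uc)) ⬝ᵥ pistar) ∧
      d - B1.mulVec xs - Ed.mulVec ustar.2 ≤ B2.mulVec y + Ec.mulVec uc ∧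
      ((c2 ⬝ᵥ y : ℝ) : EReal) ≤ ηstar)
    -- bounds of the algorithm:
    (hLB : LB = ((c1 ⬝ᵥ xs : ℝ) : EReal) + ηstar)
    (hUB : UB ≤ ((c1 ⬝ᵥ xs : ℝ) : EReal) + ηo)
    (hLBUB : LB ≤ UB) :
    LB = UB :=
  stmt14_general c1 c2 B2 d B1 Ec Ed Fc Fd hvec Ud xs ustar pistar ηstar LB UB ηo hu hworst hpi
    hdualopt hcut hLB hUB hLBUB
end
end

section
/- If the first-stage feasible set X is finite, then the parametric C&CG-MIU algorithm terminates in at most |X| + 1 iterations, since no infeasible first-stage solution can be regenerated by the master problem after its feasibility cutting set is added, and any repetition of a feasible first-stage solution implies convergence. -/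
theorem injective_comp_castLE_of_repeats_at_last {α : Type*} {N : ℕ}
    (x : Fin N → α) (h : ∀ i j : Fin N, i < j → x i = x j → (j : ℕ) = N - 1) :
    Function.Injective (x ∘ Fin.castLE (Nat.sub_le N 1)) := by
  refine Function.Injective.of_lt_imp_ne fun i j hij hx => ?_
  have hj_last : (j : ℕ) = N - 1 := h _ _ ((Fin.castLE_lt_castLE_iff _).mpr hij) hx
  exact j.isLt.ne hj_last

/-- Corollary (iteration complexity `O(|X|)`): the sequence of first-stage
solutions `x 0, …, x (N-1)` produced by the master problem of parametric
C&CG-MIU lies in the finite set `α` (the first-stage feasible set); no solution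
can ever be regenerated except that the first repetition (necessarily of a
feasible solution) terminates the algorithm, i.e. any repetition occurs only at
the final iteration.  Hence the number of iterations satisfies
`N ≤ |X| + 1`. -/
theorem stmt16 {α : Type*} [Fintype α] (N : ℕ) (x : Fin N → α)
    (h : ∀ i j : Fin N, i < j → x i = x j → (j : ℕ) = N - 1) :
    N ≤ Fintype.card α + 1 := by
  have hcard := Fintype.card_le_of_injective _
    (injective_comp_castLE_of_repeats_at_last x h)
  rw [Fintype.card_fin] at hcard
  omega
end

section
/- In the nested parametric C&CG for MIP recourse, suppose the tuple Ŝ* = {(y_d^1,π^1),…,(y_d^k,π^k)} output by the inner optimality subroutine for a feasible x* has been output in a previous iteration (so its unified cutting set is in the outer master problem OMP). Then the outer lower bound LB ≥ c1·x* + c_o(x*, Ŝ*) = c1·x* + η_o(x*) ≥ UB, hence LB = UB and the algorithm terminates. -/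
/-!
Because `Ŝ*` was output in an earlier iteration, its unified cutting set is already in OMP, so the
OMP solution `(x*, η*)` carries a recourse decision that is feasible against some
`u ∈ OU(x*, Ŝ*)` and costs at most `η*`. The correction value is an infimum over exactly such
decisions, hence `c_o(x*, Ŝ*) ≤ η*`, and the certificate `c_o = η_o` turns this into
`LB = c₁·x* + η* ≥ c₁·x* + η_o(x*) ≥ UB ≥ LB`.
-/

open Matrix

noncomputable section

/-- The bound `c_{2,d}·y_d + (d − B₁x* − Eu − B_{2,d}y_d)ᵀπ` contributed by a
pair `p = (y_d, π)` in `Ŝ*` (the data `d − B₁x*` is folded in via `d, B1, xs`). -/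
def bound18 {μ k nu nx : ℕ} (c2d : Fin k → ℝ) (d : Fin μ → ℝ)
    (B1 : Matrix (Fin μ) (Fin nx) ℝ) (xs : Fin nx → ℝ)
    (E : Matrix (Fin μ) (Fin nu) ℝ) (B2d : Matrix (Fin μ) (Fin k) ℝ)
    (u : Fin nu → ℝ) (p : (Fin k → ℝ) × (Fin μ → ℝ)) : ℝ :=
  c2d ⬝ᵥ p.1 + (d - B1.mulVec xs - E.mulVec u - B2d.mulVec p.1) ⬝ᵥ p.2

/-- Mixed integer recourse set at `x*`. -/
def Yset18 {μ ny k nu nx : ℕ} (B2c : Matrix (Fin μ) (Fin ny) ℝ)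
    (B2d : Matrix (Fin μ) (Fin k) ℝ) (Yd : Set (Fin k → ℝ))
    (d : Fin μ → ℝ) (B1 : Matrix (Fin μ) (Fin nx) ℝ) (xs : Fin nx → ℝ)
    (E : Matrix (Fin μ) (Fin nu) ℝ) (u : Fin nu → ℝ) :
    Set ((Fin ny → ℝ) × (Fin k → ℝ)) :=
  {q | 0 ≤ q.1 ∧ q.2 ∈ Yd ∧
    d - B1.mulVec xs - E.mulVec u ≤ B2c.mulVec q.1 + B2d.mulVec q.2}

/-- Projection onto `u`-space of the optimal solution set `OU(x*, Ŝ*)` of the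
LP `max{η̂ : u ∈ U, η̂ ≤ bound(u,p) ∀p ∈ Ŝ*}`: the points of `U` maximizing
`u ↦ ⨅_{p∈Ŝ*} bound(u,p)`. -/
def OUproj18 {μ k nu nx : ℕ} (c2d : Fin k → ℝ) (d : Fin μ → ℝ)
    (B1 : Matrix (Fin μ) (Fin nx) ℝ) (xs : Fin nx → ℝ)
    (E : Matrix (Fin μ) (Fin nu) ℝ) (B2d : Matrix (Fin μ) (Fin k) ℝ)
    (U : Set (Fin nu → ℝ)) (Sstar : Set ((Fin k → ℝ) × (Fin μ → ℝ))) :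
    Set (Fin nu → ℝ) :=
  {u ∈ U | ∀ u' ∈ U,
    (⨅ p ∈ Sstar, ((bound18 c2d d B1 xs E B2d u' p : ℝ) : EReal)) ≤
      ⨅ p ∈ Sstar, ((bound18 c2d d B1 xs E B2d u p : ℝ) : EReal)}

theorem add_le_and_eq_of_le {α : Type*} [Add α] [PartialOrder α] [AddLeftMono α]
    {c co ηstar LB UB : α} (hco : co ≤ ηstar) (hLB : LB = c + ηstar) (hUB : UB ≤ c + co)
    (hLBUB : LB ≤ UB) : c + co ≤ LB ∧ LB = UB := by
  have hlower : c + co ≤ LB := hLB ▸ add_le_add_right hco c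
  exact ⟨hlower, le_antisymm hLBUB (hUB.trans hlower)⟩

theorem stmt18_general {μ ny k nu nx : ℕ}
    (c1 : Fin nx → ℝ) (c2c : Fin ny → ℝ) (c2d : Fin k → ℝ)
    (B2c : Matrix (Fin μ) (Fin ny) ℝ) (B2d : Matrix (Fin μ) (Fin k) ℝ)
    (d : Fin μ → ℝ) (B1 : Matrix (Fin μ) (Fin nx) ℝ)
    (E : Matrix (Fin μ) (Fin nu) ℝ)
    (Yd : Set (Fin k → ℝ)) (U : Set (Fin nu → ℝ))
    (xs : Fin nx → ℝ) (Sstar : Set ((Fin k → ℝ) × (Fin μ → ℝ)))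
    (ηstar ηo co LB UB : EReal)
    -- the correction problem value c_o(x*, Ŝ*):
    (hcodef : co = ⨅ u ∈ OUproj18 c2d d B1 xs E B2d U Sstar,
      ⨅ q ∈ Yset18 B2c B2d Yd d B1 xs E u,
        ((c2c ⬝ᵥ q.1 + c2d ⬝ᵥ q.2 : ℝ) : EReal))
    -- the subroutine certifies c_o(x*, Ŝ*) = η_o(x*):
    (hco : co = ηo)
    -- the unified cutting set for Ŝ* is satisfied by the OMP solution (x*, η*):
    (hcut : ∃ u q, u ∈ OUproj18 c2d d B1 xs E B2d U Sstar ∧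
      q ∈ Yset18 B2c B2d Yd d B1 xs E u ∧
      ((c2c ⬝ᵥ q.1 + c2d ⬝ᵥ q.2 : ℝ) : EReal) ≤ ηstar)
    (hLB : LB = ((c1 ⬝ᵥ xs : ℝ) : EReal) + ηstar)
    (hUB : UB ≤ ((c1 ⬝ᵥ xs : ℝ) : EReal) + ηo)
    (hLBUB : LB ≤ UB) :
    ((c1 ⬝ᵥ xs : ℝ) : EReal) + co ≤ LB ∧ LB = UB := by
  obtain ⟨u, q, hu, hq, hcost⟩ := hcut
  have hco_le : co ≤ ηstar := hcodef ▸ ((iInf₂_le u hu).trans (iInf₂_le q hq)).trans hcost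
  exact add_le_and_eq_of_le hco_le hLB (hco ▸ hUB) hLBUB

/-- Theorem 3, Claim 2 (nested parametric C&CG): suppose the tuple `Ŝ*` output
by the inner optimality subroutine for a feasible `x*` was already output in a
previous iteration, so the unified cutting set defined on `Ŝ*` is in the outer
master problem OMP, witnessed by `hcut`: the OMP solution `(x*, η*)` carries a
recourse decision feasible against some `u ∈ OU(x*, Ŝ*)` with cost at most
`η*`.  With the correction value
`c_o(x*,Ŝ*) = ⨅_{u ∈ OU(x*,Ŝ*)} ⨅_{(y_c,y_d) ∈ Y(x*,u)} (c_{2,c}·y_c + c_{2,d}·y_d)`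
certified to equal `η_o(x*)` (hypothesis `hco`), `LB = c₁·x* + η*`,
`UB ≤ c₁·x* + η_o(x*)` and `LB ≤ UB`, one gets
`LB ≥ c₁·x* + c_o(x*,Ŝ*) = c₁·x* + η_o(x*) ≥ UB`, hence `LB = UB`. -/
theorem stmt18 {μ ny k nu nx : ℕ}
    (c1 : Fin nx → ℝ) (c2c : Fin ny → ℝ) (c2d : Fin k → ℝ)
    (B2c : Matrix (Fin μ) (Fin ny) ℝ) (B2d : Matrix (Fin μ) (Fin k) ℝ)
    (d : Fin μ → ℝ) (B1 : Matrix (Fin μ) (Fin nx) ℝ)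
    (E : Matrix (Fin μ) (Fin nu) ℝ)
    (Yd : Set (Fin k → ℝ)) (U : Set (Fin nu → ℝ))
    (xs : Fin nx → ℝ) (Sstar : Set ((Fin k → ℝ) × (Fin μ → ℝ)))
    (hSfin : Sstar.Finite)
    (ηstar ηo co LB UB : EReal)
    -- the correction problem value c_o(x*, Ŝ*):
    (hcodef : co = ⨅ u ∈ OUproj18 c2d d B1 xs E B2d U Sstar,
      ⨅ q ∈ Yset18 B2c B2d Yd d B1 xs E u,
        ((c2c ⬝ᵥ q.1 + c2d ⬝ᵥ q.2 : ℝ) : EReal))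
    -- the subroutine certifies c_o(x*, Ŝ*) = η_o(x*):
    (hco : co = ηo)
    -- the unified cutting set for Ŝ* is satisfied by the OMP solution (x*, η*):
    (hcut : ∃ u q, u ∈ OUproj18 c2d d B1 xs E B2d U Sstar ∧
      q ∈ Yset18 B2c B2d Yd d B1 xs E u ∧
      ((c2c ⬝ᵥ q.1 + c2d ⬝ᵥ q.2 : ℝ) : EReal) ≤ ηstar)
    (hLB : LB = ((c1 ⬝ᵥ xs : ℝ) : EReal) + ηstar)
    (hUB : UB ≤ ((c1 ⬝ᵥ xs : ℝ) : EReal) + ηo)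
    (hLBUB : LB ≤ UB) :
    ((c1 ⬝ᵥ xs : ℝ) : EReal) + co ≤ LB ∧ LB = UB :=
  stmt18_general c1 c2c c2d B2c B2d d B1 E Yd U xs Sstar ηstar ηo co LB UB hcodef hco hcut hLB hUB
    hLBUB

end
end
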